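/- Let Y₁(x,v,a) = (0,0,2v), Y₂(x,v,a) = (0,v,2a), Y₃(x,v,a) = (v,a,3a²/(2v)) on ℝ³, and let Y_α^[2](p₁,p₂) := (Y_α(p₁), Y_α(p₂)) denote their diagonal prolongations to ℝ⁶, with coordinates (x₁,v₁,a₁,x₂,v₂,a₂). The function C(x₁,v₁,a₁,x₂,v₂,a₂) = (a₂v₁ − a₁v₂)²/(v₁³v₂³) satisfies (fderiv ℝ C p)(Y_α^[2](p)) = 0 for α = 1,2,3 at every point p with v₁ ≠ 0 and v₂ ≠ 0. Hence C is a t-independent constant of motion of the diagonal prolongation of the Schwarzian system X_t = Y₃ + b₁(t)Y₁. -/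

import Mathlib

/-- Diagonal prolongations to `ℝ⁶` of the Vessiot--Guldberg vector fields of
the Schwarzian equation; coordinates
`(x₁,v₁,a₁,x₂,v₂,a₂) = (p 0, p 1, p 2, p 3, p 4, p 5)`. -/
noncomputable def schwarzY₁p : (Fin 6 → ℝ) → (Fin 6 → ℝ) :=
  fun p => ![0, 0, 2 * p 1, 0, 0, 2 * p 4]

noncomputable def schwarzY₂p : (Fin 6 → ℝ) → (Fin 6 → ℝ) :=
  fun p => ![0, p 1, 2 * p 2, 0, p 4, 2 * p 5]

noncomputable def schwarzY₃p : (Fin 6 → ℝ) → (Fin 6 → ℝ) :=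
  fun p => ![p 1, p 2, 3 * (p 2) ^ 2 / (2 * p 1),
             p 4, p 5, 3 * (p 5) ^ 2 / (2 * p 4)]

/-- `C = (a₂v₁ − a₁v₂)² / (v₁³v₂³)`. -/
noncomputable def schwarzC : (Fin 6 → ℝ) → ℝ :=
  fun p => (p 5 * p 1 - p 2 * p 4) ^ 2 / ((p 1) ^ 3 * (p 4) ^ 3)


/-!
Write `C = W² / V` with `W = a₂v₁ − a₁v₂` and `V = v₁³v₂³`. Each of the three prolonged fields
rescales `W` by some factor `λ` and `V` by `2λ` (with `λ = 0`, `3` and `3(a₂v₁ + a₁v₂)/(2v₁v₂)`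
respectively), and a quotient `W² / V` of two such relative invariants is annihilated.
-/

theorem fderiv_sq_div_apply_eq_zero {E : Type*} [NormedAddCommGroup E] [NormedSpace ℝ E]
    {s d : E → ℝ} {p v : E} {c : ℝ} (hs : DifferentiableAt ℝ s p) (hd : DifferentiableAt ℝ d p)
    (hdp : d p ≠ 0) (hsv : fderiv ℝ s p v = c * s p) (hdv : fderiv ℝ d p v = 2 * c * d p) :
    fderiv ℝ (fun q => s q ^ 2 / d q) p v = 0 := by
  have h : HasFDerivAt (fun q => s q ^ 2 / d q) _ p :=
    (hs.hasFDerivAt.pow 2).fun_mul ((hasFDerivAt_inv hdp).comp p hd.hasFDerivAt)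
  rw [h.fderiv]
  simp only [Nat.add_one_sub_one, pow_one, nsmul_eq_mul, Nat.cast_ofNat,
    add_apply, smul_apply, ContinuousLinearMap.comp_apply,
    ContinuousLinearMap.toSpanSingleton_apply, smul_eq_mul, mul_neg, hsv, hdv]
  field_simp
  ring

def schwarzDet (p : Fin 6 → ℝ) : ℝ := p 5 * p 1 - p 2 * p 4

def schwarzVCube (p : Fin 6 → ℝ) : ℝ := p 1 ^ 3 * p 4 ^ 3

theorem fderiv_schwarzDet_apply (p w : Fin 6 → ℝ) :
    fderiv ℝ schwarzDet p w = p 5 * w 1 + p 1 * w 5 - (p 2 * w 4 + p 4 * w 2) := by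
  have h := fun i : Fin 6 => hasFDerivAt_apply (𝕜 := ℝ) i p
  have hdet : HasFDerivAt schwarzDet _ p := ((h 5).fun_mul (h 1)).fun_sub ((h 2).fun_mul (h 4))
  rw [hdet.fderiv]
  simp only [sub_apply, add_apply, smul_apply, ContinuousLinearMap.proj_apply, smul_eq_mul]

theorem fderiv_schwarzVCube_apply (p w : Fin 6 → ℝ) :
    fderiv ℝ schwarzVCube p w = 3 * (p 1 ^ 2 * w 1 * p 4 ^ 3 + p 1 ^ 3 * p 4 ^ 2 * w 4) := by
  have h := fun i : Fin 6 => hasFDerivAt_apply (𝕜 := ℝ) i p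
  have hcube : HasFDerivAt schwarzVCube _ p := ((h 1).pow 3).fun_mul ((h 4).pow 3)
  rw [hcube.fderiv]
  simp only [Nat.add_one_sub_one, nsmul_eq_mul, Nat.cast_ofNat, add_apply,
    smul_apply, ContinuousLinearMap.proj_apply, smul_eq_mul]
  ring

/-- `C = (a₂v₁ − a₁v₂)²/(v₁³v₂³)` is annihilated by the diagonal
prolongations of `Y₁, Y₂, Y₃` wherever `v₁ ≠ 0` and `v₂ ≠ 0`; hence it is a
t-independent constant of motion of the prolonged Schwarzian system. -/
theorem schwarzian_constant_of_motion_C :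
    ∀ p : Fin 6 → ℝ, p 1 ≠ 0 → p 4 ≠ 0 →
      fderiv ℝ schwarzC p (schwarzY₁p p) = 0 ∧
      fderiv ℝ schwarzC p (schwarzY₂p p) = 0 ∧
      fderiv ℝ schwarzC p (schwarzY₃p p) = 0 := by
  intro p h1 h4
  have hC : ∀ (w : Fin 6 → ℝ) (c : ℝ), fderiv ℝ schwarzDet p w = c * schwarzDet p →
      fderiv ℝ schwarzVCube p w = 2 * c * schwarzVCube p → fderiv ℝ schwarzC p w = 0 :=
    fun w c => fderiv_sq_div_apply_eq_zero (by unfold schwarzDet; fun_prop)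
      (by unfold schwarzVCube; fun_prop) (by unfold schwarzVCube; positivity)
  refine ⟨hC _ 0 ?_ ?_, hC _ 3 ?_ ?_,
    hC _ (3 * (p 5 * p 1 + p 2 * p 4) / (2 * p 1 * p 4)) ?_ ?_⟩ <;>
    simp only [fderiv_schwarzDet_apply, fderiv_schwarzVCube_apply, schwarzY₁p, schwarzY₂p,
      schwarzY₃p, schwarzDet, schwarzVCube, Matrix.cons_val_zero, Matrix.cons_val_one,
      Matrix.cons_val] <;>
    field_simp <;> ring
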